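/- arXiv:2002.01357 — 6 statements merged into one kernel-verified Lean document; each statement's English description precedes it below -/
import Mathlib

section
/- Let β : ℝ → ℝ be a positive, T-periodic, continuously differentiable function (T > 0) satisfying the logistic-type equation β'(t)/2 = β(t)(ρ(t) + δ − β(t)) for all t, where ρ : ℝ → ℝ is continuous and T-periodic and δ ≥ 0. Then the average of β over a period equals the average of ρ plus δ: (1/T)∫₀ᵀ β(s) ds = (1/T)∫₀ᵀ ρ(s) ds + δ. -/
/-! Dividing the equation by `β` shows that `ρ + δ - β` is half the derivative of `log β`,
so its integral over a period vanishes by periodicity of `β`. -/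

open Real

theorem hasDerivAt_log_of_deriv_eq_mul {β : ℝ → ℝ} {g : ℝ} {t : ℝ}
    (hd : DifferentiableAt ℝ β t) (hne : β t ≠ 0) (h : deriv β t = β t * g) :
    HasDerivAt (fun s => log (β s)) g t :=
  (hd.hasDerivAt.log hne).congr_deriv (by rw [h, mul_div_cancel_left₀ g hne])

theorem intervalIntegral_eq_zero_of_deriv_eq_mul {β g : ℝ → ℝ} {a b : ℝ}
    (hd : Differentiable ℝ β) (hne : ∀ t, β t ≠ 0)
    (hg : IntervalIntegrable g MeasureTheory.volume a b)
    (h : ∀ t, deriv β t = β t * g t) (hab : β b = β a) :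
    ∫ t in a..b, g t = 0 := by
  rw [intervalIntegral.integral_eq_sub_of_hasDerivAt
    (fun t _ => hasDerivAt_log_of_deriv_eq_mul (hd t) (hne t) (h t)) hg, hab, sub_self]

theorem stmt0_general (T : ℝ) (hT : 0 < T) (ρ : ℝ → ℝ) (hρc : Continuous ρ)
    (δ : ℝ)
    (β : ℝ → ℝ) (hβ : ContDiff ℝ 1 β) (hβpos : ∀ t, 0 < β t)
    (hβp : ∀ t, β (t + T) = β t)
    (hode : ∀ t, deriv β t / 2 = β t * (ρ t + δ - β t)) :
    (1 / T) * ∫ s in (0:ℝ)..T, β s = (1 / T) * (∫ s in (0:ℝ)..T, ρ s) + δ := by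
  have hρi : IntervalIntegrable ρ MeasureTheory.volume 0 T := hρc.intervalIntegrable _ _
  have hβi : IntervalIntegrable β MeasureTheory.volume 0 T := hβ.continuous.intervalIntegrable _ _
  have hzero : ∫ t in (0:ℝ)..T, 2 * (ρ t + δ - β t) = 0 :=
    intervalIntegral_eq_zero_of_deriv_eq_mul (hβ.differentiable one_ne_zero)
      (fun t => (hβpos t).ne') (((hρi.add (by simp)).sub hβi).const_mul 2)
      (fun t => by linear_combination 2 * hode t) (by simpa using hβp 0)
  have hsplit : ∫ t in (0:ℝ)..T, 2 * (ρ t + δ - β t)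
      = 2 * ((∫ t in (0:ℝ)..T, ρ t) + δ * T - ∫ t in (0:ℝ)..T, β t) := by
    rw [intervalIntegral.integral_const_mul, intervalIntegral.integral_sub (hρi.add (by simp)) hβi,
      intervalIntegral.integral_add hρi (by simp)]
    simp [mul_comm]
  field_simp
  linarith

theorem stmt0 (T : ℝ) (hT : 0 < T) (ρ : ℝ → ℝ) (hρc : Continuous ρ)
    (hρp : ∀ t, ρ (t + T) = ρ t) (δ : ℝ) (hδ : 0 ≤ δ)
    (β : ℝ → ℝ) (hβ : ContDiff ℝ 1 β) (hβpos : ∀ t, 0 < β t)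
    (hβp : ∀ t, β (t + T) = β t)
    (hode : ∀ t, deriv β t / 2 = β t * (ρ t + δ - β t)) :
    (1 / T) * ∫ s in (0:ℝ)..T, β s = (1 / T) * (∫ s in (0:ℝ)..T, ρ s) + δ :=
  stmt0_general T hT ρ hρc δ β hβ hβpos hβp hode
end

section
/- Fix T > 0, a continuous T-periodic function ρ : ℝ → ℝ with ρ ≥ 0 and ρ not identically zero, constants δ ≥ 0, β a positive T-periodic C¹ solution of β'/2 = β(ρ + δ − β), α a positive T-periodic C¹ solution of α' + βα = μα with μ = (1/T)∫₀ᵀ β. Then the function ψ(y,t) := α(t)·exp(−β(t)y²/2) satisfies the PDE ∂ₜψ − ∂_{yy}ψ − y(ρ(t)+δ)∂_yψ = μ ψ for all (y,t) ∈ ℝ × ℝ. -/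
/-!
With `E = exp (-β t * y ^ 2 / 2)` one has `∂ₜψ = (α' - α β' y² / 2) E`, `∂_yψ = -α β y E` and
`∂_yyψ = α (β² y² - β) E`. Substituting `α' = (μ - β) α` and `β' = 2 β (ρ + δ - β)`, the quadratic
terms in `y` cancel and what is left is `μ α E`.
-/

open Real

theorem hasDerivAt_gaussianProfile_time {α β : ℝ → ℝ} {α' β' t y : ℝ}
    (hα : HasDerivAt α α' t) (hβ : HasDerivAt β β' t) :
    HasDerivAt (fun τ => α τ * exp (-β τ * y ^ 2 / 2))
      ((α' - α t * β' * y ^ 2 / 2) * exp (-β t * y ^ 2 / 2)) t := by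
  have hexp := ((hβ.fun_neg.mul_const (y ^ 2)).div_const 2).exp
  exact (hα.fun_mul hexp).congr_deriv (by ring)

section Gaussian

variable (a b : ℝ)

theorem hasDerivAt_const_mul_gaussian (z : ℝ) :
    HasDerivAt (fun z => a * exp (-b * z ^ 2 / 2)) (-(a * b * z) * exp (-b * z ^ 2 / 2)) z := by
  have hexp := (((hasDerivAt_pow 2 z).const_mul (-b)).div_const 2).exp.const_mul a
  exact hexp.congr_deriv (by ring)

theorem deriv_const_mul_gaussian :
    deriv (fun z => a * exp (-b * z ^ 2 / 2)) = fun z => -(a * b * z) * exp (-b * z ^ 2 / 2) :=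
  funext fun z => (hasDerivAt_const_mul_gaussian a b z).deriv

theorem deriv_deriv_const_mul_gaussian (y : ℝ) :
    deriv (deriv fun z => a * exp (-b * z ^ 2 / 2)) y
      = a * (b ^ 2 * y ^ 2 - b) * exp (-b * y ^ 2 / 2) := by
  rw [deriv_const_mul_gaussian]
  have hlin : HasDerivAt (fun z => -(a * b * z)) (-(a * b)) y := by
    simpa using ((hasDerivAt_id y).const_mul (a * b)).fun_neg
  have hexp := (((hasDerivAt_pow 2 y).const_mul (-b)).div_const 2).exp
  rw [(hlin.fun_mul hexp).deriv]
  ring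

end Gaussian

theorem stmt2_general (ρ : ℝ → ℝ)
    (δ : ℝ)
    (β : ℝ → ℝ) (hβ : ContDiff ℝ 1 β)
    (hβode : ∀ t, deriv β t / 2 = β t * (ρ t + δ - β t))
    (μ : ℝ)
    (α : ℝ → ℝ) (hα : ContDiff ℝ 1 α)
    (hαode : ∀ t, deriv α t + β t * α t = μ * α t)
    (ψ : ℝ → ℝ → ℝ) (hψ : ∀ y t, ψ y t = α t * Real.exp (-(β t) * y ^ 2 / 2)) :
    ∀ y t, deriv (fun τ => ψ y τ) t - deriv (deriv (fun z => ψ z t)) y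
      - y * (ρ t + δ) * deriv (fun z => ψ z t) y = μ * ψ y t := by
  obtain rfl : ψ = fun y t => α t * exp (-β t * y ^ 2 / 2) := funext₂ hψ
  intro y t
  have htime := hasDerivAt_gaussianProfile_time (y := y)
    ((hα.differentiable one_ne_zero t).hasDerivAt) ((hβ.differentiable one_ne_zero t).hasDerivAt)
  rw [htime.deriv, deriv_deriv_const_mul_gaussian, deriv_const_mul_gaussian]
  linear_combination exp (-β t * y ^ 2 / 2) * (hαode t - α t * y ^ 2 * hβode t)

theorem stmt2 (T : ℝ) (hT : 0 < T) (ρ : ℝ → ℝ) (hρc : Continuous ρ)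
    (hρp : ∀ t, ρ (t + T) = ρ t) (hρnn : ∀ t, 0 ≤ ρ t) (hρne : ∃ t, ρ t ≠ 0)
    (δ : ℝ) (hδ : 0 ≤ δ)
    (β : ℝ → ℝ) (hβ : ContDiff ℝ 1 β) (hβpos : ∀ t, 0 < β t)
    (hβp : ∀ t, β (t + T) = β t)
    (hβode : ∀ t, deriv β t / 2 = β t * (ρ t + δ - β t))
    (μ : ℝ) (hμ : μ = (1 / T) * ∫ s in (0:ℝ)..T, β s)
    (α : ℝ → ℝ) (hα : ContDiff ℝ 1 α) (hαpos : ∀ t, 0 < α t)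
    (hαp : ∀ t, α (t + T) = α t)
    (hαode : ∀ t, deriv α t + β t * α t = μ * α t)
    (ψ : ℝ → ℝ → ℝ) (hψ : ∀ y t, ψ y t = α t * Real.exp (-(β t) * y ^ 2 / 2)) :
    ∀ y t, deriv (fun τ => ψ y τ) t - deriv (deriv (fun z => ψ z t)) y
      - y * (ρ t + δ) * deriv (fun z => ψ z t) y = μ * ψ y t :=
  stmt2_general ρ δ β hβ hβode μ α hα hαode ψ hψ
end

section
/- Let T > 0, ρ : ℝ → ℝ continuous, T-periodic, nonnegative, not identically zero, with average ρ̂ = (1/T)∫₀ᵀ ρ > 0. Let δ > 0 be arbitrary. For the equation β'/2 = β(ρ + δ − β), there exists a unique positive T-periodic C¹ solution β_δ, and its average equals ρ̂ + δ. -/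
/-!
Substituting `u = 1/β` turns the logistic equation `β' = c β (a - β)` into the linear equation
`u' = c (1 - a u)`. With the integrating factor `g t = exp (c ∫₀ᵗ a)` and `E = g T`, which satisfy
`g (t + T) = E g t`, its periodic solution is `u t = c / (E - 1) * ∫ₜ^{t+T} g s / g t ds`; this is
positive precisely because `∫₀ᵀ a > 0`. For two periodic solutions, `(1/β₁ - 1/β₂) g` is constant
and is multiplied by `E ≠ 1` over one period, so it vanishes. Finally `log β` is periodic with
derivative `c (a - β)`, so `β` and `a` have the same integral over a period.
-/

open Function Real intervalIntegral

theorem hasDerivAt_integral_add_const {E : Type*} [NormedAddCommGroup E] [NormedSpace ℝ E]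
    [CompleteSpace E] {f : ℝ → E} (hf : Continuous f) (T t : ℝ) :
    HasDerivAt (fun u => ∫ s in u..u + T, f s) (f (t + T) - f t) t := by
  have hF : ∀ u, HasDerivAt (fun u => ∫ s in (0 : ℝ)..u, f s) (f u) u := fun u =>
    (hf.integral_hasStrictDerivAt 0 u).hasDerivAt
  refine (((hF (t + T)).comp_add_const t T).sub (hF t)).congr_of_eventuallyEq
    (Filter.Eventually.of_forall fun u => ?_)
  exact (integral_interval_sub_left (hf.intervalIntegrable _ _) (hf.intervalIntegrable _ _)).symm

theorem ContDiff.hasDerivAt_of_deriv_eq {β f : ℝ → ℝ} (hβ : ContDiff ℝ 1 β)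
    (hderiv : ∀ t, deriv β t = f t) (t : ℝ) : HasDerivAt β (f t) t :=
  hderiv t ▸ (hβ.differentiable one_ne_zero t).hasDerivAt

namespace Logistic

variable {a : ℝ → ℝ} {c T : ℝ}

noncomputable def integratingFactor (c : ℝ) (a : ℝ → ℝ) (t : ℝ) : ℝ := exp (c * ∫ s in 0..t, a s)

theorem integratingFactor_pos (t : ℝ) : 0 < integratingFactor c a t := exp_pos _

@[simp]
theorem integratingFactor_zero : integratingFactor c a 0 = 1 := by simp [integratingFactor]

theorem hasDerivAt_integratingFactor (ha : Continuous a) (t : ℝ) :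
    HasDerivAt (integratingFactor c a) (c * a t * integratingFactor c a t) t :=
  (((ha.integral_hasStrictDerivAt 0 t).hasDerivAt).const_mul c).exp.congr_deriv
    (by rw [integratingFactor]; ring)

theorem continuous_integratingFactor (ha : Continuous a) : Continuous (integratingFactor c a) :=
  continuous_iff_continuousAt.2 fun t => (hasDerivAt_integratingFactor ha t).continuousAt

theorem integratingFactor_add_period (ha : Continuous a) (hper : Periodic a T) (t : ℝ) :
    integratingFactor c a (t + T) = integratingFactor c a T * integratingFactor c a t := by
  have := hper.intervalIntegral_add_eq_add 0 t fun _ _ => ha.intervalIntegrable _ _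
  rw [zero_add] at this
  rw [integratingFactor, integratingFactor, integratingFactor, this, mul_add, exp_add, mul_comm]

theorem integral_integratingFactor_add_period (ha : Continuous a) (hper : Periodic a T) (t : ℝ) :
    ∫ s in t + T..t + T + T, integratingFactor c a s =
      integratingFactor c a T * ∫ s in t..t + T, integratingFactor c a s := by
  simp only [← integral_comp_add_right, integratingFactor_add_period ha hper, integral_const_mul]

theorem integral_integratingFactor_pos (hT : 0 < T) (ha : Continuous a) (t : ℝ) :
    0 < ∫ s in t..t + T, integratingFactor c a s :=
  intervalIntegral_pos_of_pos ((continuous_integratingFactor ha).intervalIntegrable _ _)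
    integratingFactor_pos (lt_add_of_pos_right t hT)

theorem integratingFactor_period_sub_one_div_pos (hc : c ≠ 0) (hI : 0 < ∫ s in 0..T, a s) :
    0 < (integratingFactor c a T - 1) / c := by
  rcases hc.lt_or_gt with hc | hc
  · refine div_pos_of_neg_of_neg (sub_neg.2 (exp_lt_one_iff.2 ?_)) hc
    exact mul_neg_of_neg_of_pos hc hI
  · exact div_pos (sub_pos.2 (one_lt_exp_iff.2 (mul_pos hc hI))) hc


noncomputable def periodicSolution (c T : ℝ) (a : ℝ → ℝ) (t : ℝ) : ℝ :=
  (integratingFactor c a T - 1) / c * integratingFactor c a t /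
    ∫ s in t..t + T, integratingFactor c a s

theorem periodicSolution_pos (hc : c ≠ 0) (hT : 0 < T) (ha : Continuous a)
    (hI : 0 < ∫ s in 0..T, a s) (t : ℝ) : 0 < periodicSolution c T a t :=
  div_pos (mul_pos (integratingFactor_period_sub_one_div_pos hc hI) (integratingFactor_pos t))
    (integral_integratingFactor_pos hT ha t)

theorem periodic_periodicSolution (ha : Continuous a) (hper : Periodic a T) :
    Periodic (periodicSolution c T a) T := fun t => by
  rw [periodicSolution, periodicSolution, integral_integratingFactor_add_period ha hper,
    integratingFactor_add_period ha hper, mul_left_comm,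
    mul_div_mul_left _ _ (integratingFactor_pos T).ne']

theorem hasDerivAt_periodicSolution (hc : c ≠ 0) (hT : 0 < T) (ha : Continuous a)
    (hper : Periodic a T) (t : ℝ) :
    HasDerivAt (periodicSolution c T a)
      (c * periodicSolution c T a t * (a t - periodicSolution c T a t)) t := by
  have hV := (integral_integratingFactor_pos (c := c) hT ha t).ne'
  refine (((hasDerivAt_integratingFactor ha t).const_mul _).div
    (hasDerivAt_integral_add_const (continuous_integratingFactor ha) T t) hV).congr_deriv ?_
  rw [integratingFactor_add_period ha hper, periodicSolution]
  field_simp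

theorem contDiff_one_of_hasDerivAt {β : ℝ → ℝ} (ha : Continuous a)
    (hβ : ∀ t, HasDerivAt β (c * β t * (a t - β t)) t) : ContDiff ℝ 1 β := by
  have hβc : Continuous β := continuous_iff_continuousAt.2 fun t => (hβ t).continuousAt
  rw [contDiff_one_iff_deriv, funext fun t => (hβ t).deriv]
  exact ⟨fun t => (hβ t).differentiableAt, by fun_prop⟩

theorem eq_of_periodic_of_hasDerivAt (ha : Continuous a) (hE : integratingFactor c a T ≠ 1)
    {β₁ β₂ : ℝ → ℝ} (h₁ : ∀ t, HasDerivAt β₁ (c * β₁ t * (a t - β₁ t)) t)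
    (h₂ : ∀ t, HasDerivAt β₂ (c * β₂ t * (a t - β₂ t)) t) (h₁pos : ∀ t, 0 < β₁ t)
    (h₂pos : ∀ t, 0 < β₂ t) (h₁per : Periodic β₁ T) (h₂per : Periodic β₂ T) : β₁ = β₂ := by
  set w := fun t => ((β₁ t)⁻¹ - (β₂ t)⁻¹) * integratingFactor c a t
  have hw : ∀ t, HasDerivAt w 0 t := fun t => by
    refine ((((h₁ t).inv (h₁pos t).ne').sub ((h₂ t).inv (h₂pos t).ne')).mul
      (hasDerivAt_integratingFactor ha t)).congr_deriv ?_
    simp only [Pi.sub_apply, Pi.inv_apply]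
    field_simp [(h₁pos t).ne', (h₂pos t).ne']
    ring
  have hconst : ∀ t, w t = w 0 := fun t =>
    is_const_of_deriv_eq_zero (fun x => (hw x).differentiableAt) (fun x => (hw x).deriv) t 0
  have hw0 : w 0 = 0 := by
    have hwT : w T = integratingFactor c a T * w 0 := by
      simp only [w, h₁per.eq, h₂per.eq, integratingFactor_zero, mul_one, mul_comm]
    have : (integratingFactor c a T - 1) * w 0 = 0 := by linarith [hconst T]
    exact (mul_eq_zero.1 this).resolve_left (sub_ne_zero.2 hE)
  funext t
  have hwt : w t = 0 := (hconst t).trans hw0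
  rcases mul_eq_zero.1 hwt with h | h
  · exact inv_injective (sub_eq_zero.1 h)
  · exact absurd h (integratingFactor_pos t).ne'

theorem integral_eq_integral_of_periodic_of_hasDerivAt (hc : c ≠ 0) (ha : Continuous a)
    {β : ℝ → ℝ} (hβ : ∀ t, HasDerivAt β (c * β t * (a t - β t)) t) (hpos : ∀ t, 0 < β t)
    (hper : Periodic β T) : ∫ s in 0..T, β s = ∫ s in 0..T, a s := by
  have hβc : Continuous β := continuous_iff_continuousAt.2 fun t => (hβ t).continuousAt
  have hlog : ∫ s in 0..T, c * (a s - β s) = 0 := by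
    rw [integral_eq_sub_of_hasDerivAt (f := fun s => log (β s))
      (fun t _ => ((hβ t).log (hpos t).ne').congr_deriv ?_)
      ((by fun_prop : Continuous fun s => c * (a s - β s)).intervalIntegrable _ _),
      hper.eq, sub_self]
    field_simp [(hpos t).ne']
  rw [integral_const_mul, integral_sub (ha.intervalIntegrable _ _) (hβc.intervalIntegrable _ _)]
    at hlog
  linarith [(mul_eq_zero.1 hlog).resolve_left hc]

theorem existsUnique_pos_periodic (hc : c ≠ 0) (hT : 0 < T) (ha : Continuous a)
    (hper : Periodic a T) (hI : 0 < ∫ s in 0..T, a s) :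
    ∃! β : ℝ → ℝ, ContDiff ℝ 1 β ∧ (∀ t, 0 < β t) ∧ Periodic β T ∧
      ∀ t, deriv β t = c * β t * (a t - β t) := by
  have hβ := hasDerivAt_periodicSolution hc hT ha hper
  refine ⟨periodicSolution c T a, ⟨contDiff_one_of_hasDerivAt ha hβ,
    periodicSolution_pos hc hT ha hI, periodic_periodicSolution ha hper,
    fun t => (hβ t).deriv⟩, ?_⟩
  rintro β₁ ⟨h₁, h₁pos, h₁per, h₁deriv⟩
  have hE : integratingFactor c a T ≠ 1 :=
    sub_ne_zero.1 (div_ne_zero_iff.1 (integratingFactor_period_sub_one_div_pos hc hI).ne').1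
  exact eq_of_periodic_of_hasDerivAt ha hE (h₁.hasDerivAt_of_deriv_eq h₁deriv) hβ h₁pos
    (periodicSolution_pos hc hT ha hI) h₁per (periodic_periodicSolution ha hper)

end Logistic

theorem stmt16_general (T : ℝ) (hT : 0 < T) (ρ : ℝ → ℝ) (hρ : Continuous ρ)
    (hρper : ∀ t, ρ (t + T) = ρ t) (hρnn : ∀ t, 0 ≤ ρ t)
    (δ : ℝ) (hδ : 0 < δ) :
    (∃! β : ℝ → ℝ, ContDiff ℝ 1 β ∧ (∀ t, 0 < β t) ∧ (∀ t, β (t + T) = β t) ∧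
        ∀ t, deriv β t = 2 * β t * (ρ t + δ - β t)) ∧
      ∀ β : ℝ → ℝ, (ContDiff ℝ 1 β ∧ (∀ t, 0 < β t) ∧ (∀ t, β (t + T) = β t) ∧
          ∀ t, deriv β t = 2 * β t * (ρ t + δ - β t)) →
        (1 / T) * ∫ s in (0:ℝ)..T, β s = (1 / T) * (∫ s in (0:ℝ)..T, ρ s) + δ := by
  have ha : Continuous fun t => ρ t + δ := by fun_prop
  have hper : Periodic (fun t => ρ t + δ) T := fun t => by simp only [hρper]
  have hintegral : ∫ s in 0..T, (ρ s + δ) = (∫ s in 0..T, ρ s) + T * δ := by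
    simp [integral_add (hρ.intervalIntegrable _ _) intervalIntegrable_const]
  have hI : 0 < ∫ s in 0..T, (ρ s + δ) := by
    rw [hintegral]
    have : 0 ≤ ∫ s in 0..T, ρ s := integral_nonneg hT.le fun s _ => hρnn s
    positivity
  refine ⟨Logistic.existsUnique_pos_periodic two_ne_zero hT ha hper hI, ?_⟩
  rintro β ⟨hβ, hpos, hβper, hderiv⟩
  rw [Logistic.integral_eq_integral_of_periodic_of_hasDerivAt two_ne_zero ha
    (hβ.hasDerivAt_of_deriv_eq hderiv) hpos hβper, hintegral]
  field_simp

theorem stmt16 (T : ℝ) (hT : 0 < T) (ρ : ℝ → ℝ) (hρ : Continuous ρ)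
    (hρper : ∀ t, ρ (t + T) = ρ t) (hρnn : ∀ t, 0 ≤ ρ t) (hρne : ∃ t, ρ t ≠ 0)
    (δ : ℝ) (hδ : 0 < δ) :
    (∃! β : ℝ → ℝ, ContDiff ℝ 1 β ∧ (∀ t, 0 < β t) ∧ (∀ t, β (t + T) = β t) ∧
        ∀ t, deriv β t = 2 * β t * (ρ t + δ - β t)) ∧
      ∀ β : ℝ → ℝ, (ContDiff ℝ 1 β ∧ (∀ t, 0 < β t) ∧ (∀ t, β (t + T) = β t) ∧
          ∀ t, deriv β t = 2 * β t * (ρ t + δ - β t)) →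
        (1 / T) * ∫ s in (0:ℝ)..T, β s = (1 / T) * (∫ s in (0:ℝ)..T, ρ s) + δ :=
  stmt16_general T hT ρ hρ hρper hρnn δ hδ
end

section
/- Let V : ℝ → ℝ be continuous on [0,1] and ε > 0, and let V_ε : [0,1] → ℝ be a C² function with sup_{[0,1]}|V_ε − V| ≤ ε. Fix T > 0 and let W : [0,1] × ℝ → ℝ be continuous, T-periodic in t with (1/T)∫₀ᵀ W(x,s)ds = V(x). Define φ_ε(x,t) = exp(−∫₀ᵗ W_ε(x,s)ds + t·V_ε(x))·β(x) for a positive C² function β, where W_ε is continuous T-periodic in t with time-average V_ε and sup|W_ε − W| ≤ ε. Then for every η > 0 there exists D₀ > 0 such that for all 0 < D < D₀ and all (x,t) ∈ (0,1)×[0,T]: ∂ₜφ_ε − D∂ₓₓφ_ε + W·φ_ε ≥ (min_{[0,1]} V − 3ε − η)·φ_ε. -/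
/-!
Write `φ = exp (-G) β`, where `G x t = ∫₀ᵗ (W_ε x s - V_ε x) ds` is the primitive of the zero-mean
part of `W_ε`. Then `∂ₜφ = (V_ε - W_ε) φ` exactly, so the zeroth-order part of the operator is
`(V_ε - W_ε + W) φ ≥ (min V - 2ε) φ`. The diffusion term costs at most `η φ` for small `D`, because
`∂ₓₓφ / φ` is built from `β, β', β''` and parametric integrals of `W_ε, ∂ₓW_ε, ∂ₓₓW_ε`, hence is
continuous in `(x, t)` and bounded on the compact `[0,1] × [0,T]`.
-/

open Real Set Filter Topology Function MeasureTheory intervalIntegral Metric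

noncomputable def partialFst (g : ℝ → ℝ → ℝ) (x s : ℝ) : ℝ :=
  fderiv ℝ (uncurry g) (x, s) (1, 0)

section partialFst

variable {g : ℝ → ℝ → ℝ}

lemma hasDerivAt_partialFst (hg : ContDiff ℝ 1 (uncurry g)) (x s : ℝ) :
    HasDerivAt (fun y => g y s) (partialFst g x s) x :=
  (hg.differentiable one_ne_zero (x, s)).hasFDerivAt.comp_hasDerivAt (f := fun y => (y, s)) x
    ((hasDerivAt_id x).prodMk (hasDerivAt_const x s))

lemma contDiff_uncurry_partialFst {n : WithTop ℕ∞} (hg : ContDiff ℝ (n + 1) (uncurry g)) :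
    ContDiff ℝ n (uncurry (partialFst g)) :=
  (hg.fderiv_right le_rfl).clm_apply contDiff_const

lemma hasDerivAt_intervalIntegral_of_contDiff (hg : ContDiff ℝ 1 (uncurry g)) (a b x₀ : ℝ) :
    HasDerivAt (fun x => ∫ s in a..b, g x s) (∫ s in a..b, partialFst g x₀ s) x₀ := by
  have hg' : Continuous (uncurry (partialFst g)) :=
    (contDiff_uncurry_partialFst (n := 0) (by simpa using hg)).continuous
  obtain ⟨C, hC⟩ := ((isCompact_closedBall x₀ 1).prod isCompact_uIcc).exists_bound_of_continuousOn
    (hg'.continuousOn (s := closedBall x₀ 1 ×ˢ uIcc a b))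
  exact (hasDerivAt_integral_of_dominated_loc_of_deriv_le (bound := fun _ => C)
    (ball_mem_nhds x₀ one_pos)
    (Eventually.of_forall fun x => (hg.continuous.uncurry_left x).aestronglyMeasurable)
    ((hg.continuous.uncurry_left x₀).intervalIntegrable _ _)
    (hg'.uncurry_left x₀).aestronglyMeasurable
    (Eventually.of_forall fun s hs x hx =>
      hC (x, s) ⟨ball_subset_closedBall hx, uIoc_subset_uIcc hs⟩)
    intervalIntegrable_const
    (Eventually.of_forall fun s _ x _ => hasDerivAt_partialFst hg x s)).2

end partialFst

noncomputable def centeredPrimitive (T : ℝ) (g : ℝ → ℝ → ℝ) (x t : ℝ) : ℝ :=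
  (∫ s in (0:ℝ)..t, g x s) - t * ((1 / T) * ∫ s in (0:ℝ)..T, g x s)

section centeredPrimitive

variable {T : ℝ} {g : ℝ → ℝ → ℝ}

lemma continuous_uncurry_centeredPrimitive (hg : Continuous (uncurry g)) :
    Continuous (uncurry (centeredPrimitive T g)) := by
  have h := continuous_parametric_primitive_of_continuous (a₀ := 0) (μ := volume) hg
  have h' := continuous_parametric_intervalIntegral_of_continuous' (μ := volume) hg 0 T
  unfold centeredPrimitive uncurry
  fun_prop

lemma hasDerivAt_centeredPrimitive_fst (hg : ContDiff ℝ 1 (uncurry g)) (x t : ℝ) :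
    HasDerivAt (fun y => centeredPrimitive T g y t) (centeredPrimitive T (partialFst g) x t) x :=
  (hasDerivAt_intervalIntegral_of_contDiff hg 0 t x).sub
    (((hasDerivAt_intervalIntegral_of_contDiff hg 0 T x).const_mul (1 / T)).const_mul t)

lemma hasDerivAt_centeredPrimitive_snd {x : ℝ} (hg : Continuous (g x)) (t : ℝ) :
    HasDerivAt (fun τ => centeredPrimitive T g x τ) (g x t - (1 / T) * ∫ s in (0:ℝ)..T, g x s) t := by
  have h := (hg.integral_hasStrictDerivAt 0 t).hasDerivAt.sub
    ((hasDerivAt_id t).mul_const ((1 / T) * ∫ s in (0:ℝ)..T, g x s))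
  rw [one_mul] at h
  exact h

lemma deriv_exp_neg_centeredPrimitive_mul {x : ℝ} (hg : Continuous (g x)) (b t : ℝ) :
    deriv (fun τ => exp (-centeredPrimitive T g x τ) * b) t =
      ((1 / T) * (∫ s in (0:ℝ)..T, g x s) - g x t) * (exp (-centeredPrimitive T g x t) * b) :=
  ((hasDerivAt_centeredPrimitive_snd hg t).neg.exp.mul_const b).deriv.trans
    (by rw [Pi.neg_apply]; ring)

end centeredPrimitive

lemma deriv_deriv_exp_mul {G G' G'' β : ℝ → ℝ} (hG : ∀ y, HasDerivAt G (G' y) y)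
    (hG' : ∀ y, HasDerivAt G' (G'' y) y) (hβ : ContDiff ℝ 2 β) (x : ℝ) :
    deriv (deriv fun y => exp (G y) * β y) x = exp (G x) *
      (G' x ^ 2 * β x + 2 * G' x * deriv β x + G'' x * β x + deriv (deriv β) x) := by
  have hβ' : ContDiff ℝ 1 (deriv β) := hβ.deriv'
  have hβd : ∀ y, HasDerivAt β (deriv β y) y := fun y =>
    (hβ.differentiable (by norm_num) y).hasDerivAt
  have hβdd : ∀ y, HasDerivAt (deriv β) (deriv (deriv β) y) y := fun y =>
    (hβ'.differentiable one_ne_zero y).hasDerivAt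
  have h1 : deriv (fun y => exp (G y) * β y) = fun y => exp (G y) * (G' y * β y + deriv β y) :=
    funext fun y => ((hG y).exp.mul (hβd y)).deriv.trans (by ring)
  rw [h1]
  exact ((hG x).exp.mul (((hG' x).mul (hβd x)).add (hβdd x))).deriv.trans
    (by simp only [Pi.add_apply, Pi.mul_apply]; ring)

lemma exists_deriv_deriv_le_mul_of_isCompact {T : ℝ} {g : ℝ → ℝ → ℝ}
    (hg : ContDiff ℝ 2 (uncurry g)) {β : ℝ → ℝ} (hβ : ContDiff ℝ 2 β) (hβpos : ∀ x, 0 < β x)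
    {K : Set (ℝ × ℝ)} (hK : IsCompact K) :
    ∃ C, ∀ p ∈ K, deriv (deriv fun y => exp (-centeredPrimitive T g y p.2) * β y) p.1 ≤
      C * (exp (-centeredPrimitive T g p.1 p.2) * β p.1) := by
  have hg₁ : ContDiff ℝ 1 (uncurry (partialFst g)) := contDiff_uncurry_partialFst hg
  have hg₂ : Continuous (uncurry (partialFst (partialFst g))) :=
    (contDiff_uncurry_partialFst (n := 0) (by simpa using hg₁)).continuous
  set G₁ := centeredPrimitive T (partialFst g)
  set G₂ := centeredPrimitive T (partialFst (partialFst g))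
  set R : ℝ × ℝ → ℝ := fun p => (G₁ p.1 p.2 ^ 2 * β p.1 - 2 * G₁ p.1 p.2 * deriv β p.1
    - G₂ p.1 p.2 * β p.1 + deriv (deriv β) p.1) / β p.1
  have hR : Continuous R := by
    have : Continuous fun p : ℝ × ℝ => G₁ p.1 p.2 :=
      continuous_uncurry_centeredPrimitive hg₁.continuous
    have : Continuous fun p : ℝ × ℝ => G₂ p.1 p.2 := continuous_uncurry_centeredPrimitive hg₂
    have := hβ.continuous
    have := hβ.continuous_deriv (by norm_num)
    have := (hβ.deriv' (n := 1)).continuous_deriv le_rfl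
    fun_prop (disch := exact fun p : ℝ × ℝ => (hβpos p.1).ne')
  obtain ⟨C, hC⟩ := hK.bddAbove_image hR.continuousOn
  refine ⟨C, fun p hp => ?_⟩
  rw [deriv_deriv_exp_mul (G := fun y => -centeredPrimitive T g y p.2)
    (G' := fun y => -G₁ y p.2) (G'' := fun y => -G₂ y p.2)
    (fun y => (hasDerivAt_centeredPrimitive_fst (hg.of_le (by norm_num)) y p.2).neg)
    (fun y => (hasDerivAt_centeredPrimitive_fst hg₁ y p.2).neg) hβ]
  calc _ = R p * (exp (-centeredPrimitive T g p.1 p.2) * β p.1) := by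
        simp only [R]
        field_simp [(hβpos p.1).ne']
        ring
    _ ≤ _ := mul_le_mul_of_nonneg_right (hC ⟨p, hp, rfl⟩) (by positivity [hβpos p.1])

lemma exists_pos_forall_mul_deriv_deriv_le {T : ℝ} {g : ℝ → ℝ → ℝ}
    (hg : ContDiff ℝ 2 (uncurry g)) {β : ℝ → ℝ} (hβ : ContDiff ℝ 2 β) (hβpos : ∀ x, 0 < β x)
    {K : Set (ℝ × ℝ)} (hK : IsCompact K) {η : ℝ} (hη : 0 < η) :
    ∃ D₀ > 0, ∀ D, 0 < D → D < D₀ → ∀ p ∈ K,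
      D * deriv (deriv fun y => exp (-centeredPrimitive T g y p.2) * β y) p.1 ≤
        η * (exp (-centeredPrimitive T g p.1 p.2) * β p.1) := by
  obtain ⟨C, hC⟩ := exists_deriv_deriv_le_mul_of_isCompact (T := T) hg hβ hβpos hK
  have hsmall : ∀ᶠ D in 𝓝[>] 0, D * C < η :=
    (((continuous_mul_const C).tendsto' 0 0 (zero_mul C)).eventually (gt_mem_nhds hη)).filter_mono
      nhdsWithin_le_nhds
  obtain ⟨D₀, hD₀, hD₀C⟩ := (nhdsGT_basis (0:ℝ)).eventually_iff.mp hsmall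
  refine ⟨D₀, hD₀, fun D hD hDD₀ p hp => ?_⟩
  calc _ ≤ D * (C * (exp (-centeredPrimitive T g p.1 p.2) * β p.1)) :=
        mul_le_mul_of_nonneg_left (hC p hp) hD.le
    _ = D * C * (exp (-centeredPrimitive T g p.1 p.2) * β p.1) := by ring
    _ ≤ _ := by gcongr; exacts [(mul_pos (exp_pos _) (hβpos p.1)).le, (hD₀C ⟨hD, hDD₀⟩).le]

lemma abs_average_sub_average_le {f g : ℝ → ℝ} {T ε : ℝ} (hT : 0 < T)
    (hf : IntervalIntegrable f volume 0 T) (hg : IntervalIntegrable g volume 0 T)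
    (hfg : ∀ s, |f s - g s| ≤ ε) :
    |(1 / T) * (∫ s in (0:ℝ)..T, f s) - (1 / T) * ∫ s in (0:ℝ)..T, g s| ≤ ε := by
  have h := norm_integral_le_of_norm_le_const (a := 0) (b := T) (f := fun s => f s - g s)
    fun s _ => hfg s
  rw [sub_zero, abs_of_pos hT, Real.norm_eq_abs] at h
  rw [← mul_sub, ← integral_sub hf hg, abs_mul, abs_of_pos (one_div_pos.2 hT)]
  calc 1 / T * |∫ s in (0:ℝ)..T, f s - g s| ≤ 1 / T * (ε * T) := by gcongr
    _ = ε := by field_simp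

theorem stmt17_general (T : ℝ) (hT : 0 < T)
    (W : ℝ → ℝ → ℝ) (hW : Continuous fun p : ℝ × ℝ => W p.1 p.2)
    (V : ℝ → ℝ) (hV : ∀ x, V x = (1 / T) * ∫ s in (0:ℝ)..T, W x s)
    (ε : ℝ) (hε : 0 < ε)
    (Wε : ℝ → ℝ → ℝ) (hWε : ContDiff ℝ 2 fun p : ℝ × ℝ => Wε p.1 p.2)
    (hWεclose : ∀ x ∈ Set.Icc (0:ℝ) 1, ∀ t, |Wε x t - W x t| ≤ ε)
    (Vε : ℝ → ℝ) (hVε : ∀ x, Vε x = (1 / T) * ∫ s in (0:ℝ)..T, Wε x s)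
    (β : ℝ → ℝ) (hβ : ContDiff ℝ 2 β) (hβpos : ∀ x, 0 < β x)
    (φ : ℝ → ℝ → ℝ)
    (hφ : ∀ x t, φ x t = Real.exp (-(∫ s in (0:ℝ)..t, Wε x s) + t * Vε x) * β x) :
    ∀ η > 0, ∃ D₀ > 0, ∀ D : ℝ, 0 < D → D < D₀ →
      ∀ x ∈ Set.Ioo (0:ℝ) 1, ∀ t ∈ Set.Icc (0:ℝ) T,
        deriv (fun τ => φ x τ) t - D * deriv (deriv (fun y => φ y t)) x + W x t * φ x t ≥
          (sInf (V '' Set.Icc (0:ℝ) 1) - 3 * ε - η) * φ x t := by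
  intro η hη
  have hφ' : ∀ x t, φ x t = exp (-centeredPrimitive T Wε x t) * β x := fun x t => by
    rw [hφ, hVε, centeredPrimitive, neg_sub, sub_eq_neg_add]
  have hφpos : ∀ x t, 0 < φ x t := fun x t => by rw [hφ']; exact mul_pos (exp_pos _) (hβpos x)
  obtain ⟨D₀, hD₀, hdiff⟩ := exists_pos_forall_mul_deriv_deriv_le (T := T) hWε hβ hβpos
    (isCompact_Icc.prod isCompact_Icc : IsCompact (Icc (0:ℝ) 1 ×ˢ Icc 0 T)) hη
  refine ⟨D₀, hD₀, fun D hD hDD₀ x hx t ht => ?_⟩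
  have hxI : x ∈ Icc (0:ℝ) 1 := Ioo_subset_Icc_self hx
  have hdt : deriv (fun τ => φ x τ) t = (Vε x - Wε x t) * φ x t := by
    simp only [hφ', hVε]
    exact deriv_exp_neg_centeredPrimitive_mul (hWε.continuous.uncurry_left x) (β x) t
  have hdxx : D * deriv (deriv fun y => φ y t) x ≤ η * φ x t := by
    simpa only [← hφ'] using hdiff D hD hDD₀ (x, t) ⟨hxI, ht⟩
  have hVVε : V x - ε ≤ Vε x := by
    have := abs_average_sub_average_le hT ((hW.uncurry_left x).intervalIntegrable 0 T)
      ((hWε.continuous.uncurry_left x).intervalIntegrable 0 T)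
      (fun s => by rw [abs_sub_comm]; exact hWεclose x hxI s)
    rw [← hV, ← hVε] at this
    linarith [(abs_le.mp this).2]
  have hVinf : sInf (V '' Icc 0 1) ≤ V x := by
    have hVc : Continuous V := funext hV ▸
      continuous_const.mul (continuous_parametric_intervalIntegral_of_continuous' hW 0 T)
    exact csInf_le (isCompact_Icc.image hVc).bddBelow ⟨x, hxI, rfl⟩
  have hcoef : (sInf (V '' Icc 0 1) - 3 * ε) * φ x t ≤ (Vε x - Wε x t + W x t) * φ x t := by
    have := (abs_le.mp (hWεclose x hxI t)).2
    exact mul_le_mul_of_nonneg_right (by linarith) (hφpos x t).le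
  rw [hdt, ge_iff_le]
  linarith

theorem stmt17 (T : ℝ) (hT : 0 < T)
    (W : ℝ → ℝ → ℝ) (hW : Continuous fun p : ℝ × ℝ => W p.1 p.2)
    (hWper : ∀ x t, W x (t + T) = W x t)
    (V : ℝ → ℝ) (hV : ∀ x, V x = (1 / T) * ∫ s in (0:ℝ)..T, W x s)
    (ε : ℝ) (hε : 0 < ε)
    (Wε : ℝ → ℝ → ℝ) (hWε : ContDiff ℝ 2 fun p : ℝ × ℝ => Wε p.1 p.2)
    (hWεper : ∀ x t, Wε x (t + T) = Wε x t)
    (hWεclose : ∀ x ∈ Set.Icc (0:ℝ) 1, ∀ t, |Wε x t - W x t| ≤ ε)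
    (Vε : ℝ → ℝ) (hVε : ∀ x, Vε x = (1 / T) * ∫ s in (0:ℝ)..T, Wε x s)
    (β : ℝ → ℝ) (hβ : ContDiff ℝ 2 β) (hβpos : ∀ x, 0 < β x)
    (φ : ℝ → ℝ → ℝ)
    (hφ : ∀ x t, φ x t = Real.exp (-(∫ s in (0:ℝ)..t, Wε x s) + t * Vε x) * β x) :
    ∀ η > 0, ∃ D₀ > 0, ∀ D : ℝ, 0 < D → D < D₀ →
      ∀ x ∈ Set.Ioo (0:ℝ) 1, ∀ t ∈ Set.Icc (0:ℝ) T,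
        deriv (fun τ => φ x τ) t - D * deriv (deriv (fun y => φ y t)) x + W x t * φ x t ≥
          (sInf (V '' Set.Icc (0:ℝ) 1) - 3 * ε - η) * φ x t :=
  stmt17_general T hT W hW V hV ε hε Wε hWε hWεclose Vε hVε β hβ hβpos φ hφ
end

section
/- Let T > 0 and V : ℝ → ℝ continuous T-periodic, and let M₂ > 0, δ ∈ (0,1). Define f(t) = exp(−∫₀ᵗ V(s)ds + V̂·t) with V̂ = (1/T)∫₀ᵀ V, and set φ̄(x,t) = f(t)·exp(M₂(1−x)²/(2δ)) on [1−δ,1]×[0,T]. Suppose m satisfies −∂ₓm(x,t)·∂ₓφ̄(x,t) ≥ 0 on this region (e.g. ∂ₓm ≥ 0 there, since ∂ₓφ̄ ≤ 0). Then for every η > 0 there exists D₀ > 0 such that for 0 < D < D₀: ∂ₜφ̄ − D∂ₓₓφ̄ − ∂ₓm·∂ₓφ̄ + W(x,t)φ̄ ≥ (V̂ − η − ω)·φ̄ on [1−δ,1]×[0,T], where W is continuous T-periodic with W(1,t) = V(t) and ω = sup_{[1−δ,1]×[0,T]}|W(x,t) − V(t)|. -/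
/-! The barrier separates as `φ̄ = f(t) g(x)` with `f' = (V̂ - V) f`, `g' = -(M₂(1-x)/δ) g` and
`g'' = (M₂/δ + (M₂(1-x)/δ)²) g ≤ (M₂/δ + M₂²) g` on `[1-δ, 1]`. Dividing the operator by `φ̄ > 0`
leaves `V̂ - V - D(M₂/δ + (M₂(1-x)/δ)²) + ∂ₓm · M₂(1-x)/δ + W`: the drift term is nonnegative,
`W - V ≥ -ω`, and the diffusion term is at most `η` once `D < η / (M₂/δ + M₂²)`. -/

open Real

theorem hasDerivAt_exp_neg_integral_add_mul {V : ℝ → ℝ} (hV : Continuous V) (c t : ℝ) :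
    HasDerivAt (fun τ => exp (-(∫ s in (0:ℝ)..τ, V s) + c * τ))
      ((c - V t) * exp (-(∫ s in (0:ℝ)..t, V s) + c * t)) t := by
  have hexponent : HasDerivAt (fun τ => -(∫ s in (0:ℝ)..τ, V s) + c * τ) (-V t + c * 1) t :=
    (hV.integral_hasStrictDerivAt 0 t).hasDerivAt.neg.add ((hasDerivAt_id' t).const_mul c)
  exact hexponent.exp.congr_deriv (by ring)

section GaussianBump

variable (M δ c : ℝ)

theorem hasDerivAt_exp_mul_sq_div (y : ℝ) :
    HasDerivAt (fun z => exp (M * (c - z) ^ 2 / (2 * δ)))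
      (-(M * (c - y) / δ) * exp (M * (c - y) ^ 2 / (2 * δ))) y := by
  have hsub : HasDerivAt (fun z => c - z) (-1) y := (hasDerivAt_id' y).const_sub c
  have hexponent : HasDerivAt (fun z => M * (c - z) ^ 2 / (2 * δ)) (-(M * (c - y) / δ)) y :=
    (((hsub.pow 2).const_mul M).div_const (2 * δ)).congr_deriv (by push_cast; ring)
  exact hexponent.exp.congr_deriv (mul_comm _ _)

theorem deriv_exp_mul_sq_div :
    deriv (fun z => exp (M * (c - z) ^ 2 / (2 * δ)))
      = fun y => -(M * (c - y) / δ) * exp (M * (c - y) ^ 2 / (2 * δ)) :=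
  funext fun y => (hasDerivAt_exp_mul_sq_div M δ c y).deriv

theorem deriv_deriv_exp_mul_sq_div (y : ℝ) :
    deriv (deriv fun z => exp (M * (c - z) ^ 2 / (2 * δ))) y
      = (M / δ + (M * (c - y) / δ) ^ 2) * exp (M * (c - y) ^ 2 / (2 * δ)) := by
  rw [deriv_exp_mul_sq_div]
  have hlin : HasDerivAt (fun z => -(M * (c - z) / δ)) (-(M * -1 / δ)) y :=
    ((((hasDerivAt_id' y).const_sub c).const_mul M).div_const δ).neg
  exact ((hlin.mul (hasDerivAt_exp_mul_sq_div M δ c y)).congr_deriv (by ring)).deriv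

end GaussianBump

theorem mul_one_sub_div_mem_Icc {M δ x : ℝ} (hM : 0 ≤ M) (hδ : 0 < δ)
    (hx : x ∈ Set.Icc (1 - δ) 1) : M * (1 - x) / δ ∈ Set.Icc 0 M := by
  refine ⟨div_nonneg (mul_nonneg hM (by linarith [hx.2])) hδ.le, ?_⟩
  rw [div_le_iff₀ hδ]
  nlinarith [hx.1]

theorem IsCompact.le_sSup_image {α : Type*} [TopologicalSpace α] {F : α → ℝ} {s : Set α}
    (hs : IsCompact s) (hF : ContinuousOn F s) {p : α} (hp : p ∈ s) :
    F p ≤ sSup (F '' s) :=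
  le_csSup (hs.bddAbove_image hF) ⟨p, hp, rfl⟩

theorem stmt18_general (T : ℝ)
    (V : ℝ → ℝ) (hV : Continuous V)
    (Vhat : ℝ)
    (M₂ δ : ℝ) (hM₂ : 0 < M₂) (hδ : 0 < δ)
    (f : ℝ → ℝ) (hf : ∀ t, f t = Real.exp (-(∫ s in (0:ℝ)..t, V s) + Vhat * t))
    (φ : ℝ → ℝ → ℝ)
    (hφ : ∀ x t, φ x t = f t * Real.exp (M₂ * (1 - x) ^ 2 / (2 * δ)))
    (W : ℝ → ℝ → ℝ) (hW : Continuous fun p : ℝ × ℝ => W p.1 p.2)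
    (ω : ℝ)
    (hω : ω = sSup ((fun p : ℝ × ℝ => |W p.1 p.2 - V p.2|) ''
      (Set.Icc (1 - δ) 1 ×ˢ Set.Icc 0 T)))
    (m : ℝ → ℝ → ℝ)
    (hmx : ∀ x ∈ Set.Icc (1 - δ) 1, ∀ t ∈ Set.Icc (0:ℝ) T, 0 ≤ deriv (fun y => m y t) x) :
    ∀ η > 0, ∃ D₀ > 0, ∀ D : ℝ, 0 < D → D < D₀ →
      ∀ x ∈ Set.Icc (1 - δ) 1, ∀ t ∈ Set.Icc (0:ℝ) T,
        deriv (fun τ => φ x τ) t - D * deriv (deriv (fun y => φ y t)) x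
          - deriv (fun y => m y t) x * deriv (fun y => φ y t) x + W x t * φ x t ≥
          (Vhat - η - ω) * φ x t := by
  intro η hη
  have hK : 0 < M₂ / δ + M₂ ^ 2 := by positivity
  refine ⟨η / (M₂ / δ + M₂ ^ 2), by positivity, fun D hD hDK x hx t ht => ?_⟩
  set A := M₂ * (1 - x) / δ
  obtain ⟨hA0, hAM⟩ := mul_one_sub_div_mem_Icc hM₂.le hδ hx
  have hdiffusion : D * (M₂ / δ + A ^ 2) ≤ η := by
    calc D * (M₂ / δ + A ^ 2) ≤ D * (M₂ / δ + M₂ ^ 2) := by gcongr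
      _ ≤ η := ((lt_div_iff₀ hK).1 hDK).le
  have hWV : |W x t - V t| ≤ ω := hω ▸ (isCompact_Icc.prod isCompact_Icc).le_sSup_image
    (F := fun p : ℝ × ℝ => |W p.1 p.2 - V p.2|) (hW.sub (hV.comp continuous_snd)).abs.continuousOn
    (Set.mk_mem_prod hx ht)
  have hdrift : 0 ≤ deriv (fun y => m y t) x * A := mul_nonneg (hmx x hx t ht) hA0
  have hbracket : Vhat - η - ω ≤ (Vhat - V t) - D * (M₂ / δ + A ^ 2)
      + deriv (fun y => m y t) x * A + W x t := by
    linarith [neg_abs_le (W x t - V t)]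
  have hft : deriv f t = (Vhat - V t) * f t := by
    rw [funext hf]
    exact (hasDerivAt_exp_neg_integral_add_mul hV Vhat t).deriv
  rw [show (fun τ => φ x τ) = _ from funext (hφ x), show (fun y => φ y t) = _ from funext (hφ · t),
    deriv_mul_const_field', deriv_const_mul_field', deriv_const_mul_field']
  beta_reduce
  rw [deriv_deriv_exp_mul_sq_div, deriv_exp_mul_sq_div, hφ, hft]
  have hpos := mul_pos (show 0 < f t from hf t ▸ exp_pos _)
    (exp_pos (M₂ * (1 - x) ^ 2 / (2 * δ)))
  linarith [mul_le_mul_of_nonneg_left hbracket hpos.le]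

theorem stmt18 (T : ℝ) (hT : 0 < T)
    (V : ℝ → ℝ) (hV : Continuous V) (hVper : ∀ t, V (t + T) = V t)
    (Vhat : ℝ) (hVhat : Vhat = (1 / T) * ∫ s in (0:ℝ)..T, V s)
    (M₂ δ : ℝ) (hM₂ : 0 < M₂) (hδ : 0 < δ) (hδ1 : δ < 1)
    (f : ℝ → ℝ) (hf : ∀ t, f t = Real.exp (-(∫ s in (0:ℝ)..t, V s) + Vhat * t))
    (φ : ℝ → ℝ → ℝ)
    (hφ : ∀ x t, φ x t = f t * Real.exp (M₂ * (1 - x) ^ 2 / (2 * δ)))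
    (W : ℝ → ℝ → ℝ) (hW : Continuous fun p : ℝ × ℝ => W p.1 p.2)
    (hWper : ∀ x t, W x (t + T) = W x t) (hW1 : ∀ t, W 1 t = V t)
    (ω : ℝ)
    (hω : ω = sSup ((fun p : ℝ × ℝ => |W p.1 p.2 - V p.2|) ''
      (Set.Icc (1 - δ) 1 ×ˢ Set.Icc 0 T)))
    (m : ℝ → ℝ → ℝ) (hm : ContDiff ℝ 2 fun p : ℝ × ℝ => m p.1 p.2)
    (hmx : ∀ x ∈ Set.Icc (1 - δ) 1, ∀ t ∈ Set.Icc (0:ℝ) T, 0 ≤ deriv (fun y => m y t) x) :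
    ∀ η > 0, ∃ D₀ > 0, ∀ D : ℝ, 0 < D → D < D₀ →
      ∀ x ∈ Set.Icc (1 - δ) 1, ∀ t ∈ Set.Icc (0:ℝ) T,
        deriv (fun τ => φ x τ) t - D * deriv (deriv (fun y => φ y t)) x
          - deriv (fun y => m y t) x * deriv (fun y => φ y t) x + W x t * φ x t ≥
          (Vhat - η - ω) * φ x t :=
  stmt18_general T V hV Vhat M₂ δ hM₂ hδ f hf φ hφ W hW ω hω m hmx
end

section
/- Let g : ℝ × ℝ → ℝ be continuous, Lipschitz in the first variable, with g(x, t+T) = g(x, t). Suppose a < b are real numbers with g(a, t) ≥ 0 and g(b, t) ≤ 0 for all t. Then there exists a T-periodic C¹ (indeed Lipschitz) solution p : ℝ → [a, b] of p'(t) = g(p(t), t). -/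
/-!
Extend the field `g` outside `[a, b]` by its boundary values; the extension is globally
Lipschitz and bounded on `[0, T]`, so Picard–Lindelöf gives a flow that is continuous in the
initial point. The inward conditions at `a` and `b` make `[a, b]` invariant, so the Poincaré map
`x ↦ φ x T` sends `[a, b]` into itself and has a fixed point `c` by the intermediate value
theorem. The solution through `c` on `[0, T]` has equal values, and by periodicity of `g` equal
derivatives, at the two endpoints, so its `T`-periodic extension solves the equation on `ℝ`.
-/

open Set Filter Topology AddCommGroup NNReal Metric

section PeriodicExtension

variable {T : ℝ} (hT : 0 < T) (a : ℝ)

theorem hasDerivWithinAt_toIcoMod_Ici (t : ℝ) : HasDerivWithinAt (toIcoMod hT a) 1 (Ici t) t :=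
  ((hasDerivWithinAt_id t _).sub_const (toIcoDiv hT a t • T)).congr_of_eventuallyEq
    ((eventuallyEq_toIcoDiv_nhdsGE hT a t).mono fun u hu => by
      rw [← self_sub_toIcoDiv_zsmul, hu]; rfl)
    (self_sub_toIcoDiv_zsmul hT a t).symm

theorem hasDerivWithinAt_toIocMod_Iic (t : ℝ) : HasDerivWithinAt (toIocMod hT a) 1 (Iic t) t :=
  ((hasDerivWithinAt_id t _).sub_const (toIocDiv hT a t • T)).congr_of_eventuallyEq
    ((eventuallyEq_toIocDiv_nhdsLE hT a t).mono fun u hu => by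
      rw [← self_sub_toIocDiv_zsmul, hu]; rfl)
    (self_sub_toIocDiv_zsmul hT a t).symm

theorem comp_toIocMod_eq_comp_toIcoMod {α : Type*} {f : ℝ → α} (hf : f a = f (a + T)) :
    f ∘ toIocMod hT a = f ∘ toIcoMod hT a := by
  ext t
  by_cases hmod : a ≡ t [PMOD T]
  · simp only [Function.comp_apply, (modEq_iff_toIcoMod_eq_left hT).1 hmod,
      (modEq_iff_toIocMod_eq_right hT).1 hmod, hf]
  · simp only [Function.comp_apply, (not_modEq_iff_toIcoMod_eq_toIocMod hT).1 hmod]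

theorem hasDerivAt_comp_toIcoMod {E : Type*} [NormedAddCommGroup E] [NormedSpace ℝ E]
    {f f' : ℝ → E} (hf : ∀ t ∈ Icc a (a + T), HasDerivWithinAt f (f' t) (Icc a (a + T)) t)
    (hfa : f a = f (a + T)) (hf'a : f' a = f' (a + T)) (t : ℝ) :
    HasDerivAt (f ∘ toIcoMod hT a) (f' (toIcoMod hT a t)) t := by
  have hright : HasDerivWithinAt (f ∘ toIcoMod hT a) (f' (toIcoMod hT a t)) (Ici t) t := by
    simpa using (hf _ (Ico_subset_Icc_self (toIcoMod_mem_Ico hT a t))).scomp t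
      (hasDerivWithinAt_toIcoMod_Ici hT a t)
      fun u _ => Ico_subset_Icc_self (toIcoMod_mem_Ico hT a u)
  have hleft : HasDerivWithinAt (f ∘ toIocMod hT a) (f' (toIocMod hT a t)) (Iic t) t := by
    simpa using (hf _ (Ioc_subset_Icc_self (toIocMod_mem_Ioc hT a t))).scomp t
      (hasDerivWithinAt_toIocMod_Iic hT a t)
      fun u _ => Ioc_subset_Icc_self (toIocMod_mem_Ioc hT a u)
  rw [comp_toIocMod_eq_comp_toIcoMod hT a hfa,
    ← Function.comp_apply (f := f'), comp_toIocMod_eq_comp_toIcoMod hT a hf'a] at hleft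
  have := hleft.union hright
  rwa [Iic_union_Ici, hasDerivWithinAt_univ] at this

end PeriodicExtension

theorem le_of_hasDerivWithinAt_nonpos_of_le {f f' : ℝ → ℝ} {t₀ t₁ c : ℝ}
    (hf : ∀ t ∈ Icc t₀ t₁, HasDerivWithinAt f (f' t) (Icc t₀ t₁) t) (h₀ : f t₀ ≤ c)
    (hc : ∀ t ∈ Ico t₀ t₁, c ≤ f t → f' t ≤ 0) {t : ℝ} (ht : t ∈ Icc t₀ t₁) : f t ≤ c := by
  have hf_cont : ContinuousOn f (Icc t₀ t₁) := fun s hs => (hf s hs).continuousWithinAt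
  have hf_right (s) (hs : s ∈ Ico t₀ t₁) : HasDerivWithinAt f (f' s) (Ici s) s :=
    (hf s (Ico_subset_Icc_self hs)).mono_of_mem_nhdsWithin (Icc_mem_nhdsGE_of_mem hs)
  -- compare with the tilted barriers `c + ε (s - t₀)`, which `f` cannot touch, then let `ε → 0`
  have h_barrier (ε : ℝ) (hε : 0 < ε) : f t ≤ c + ε * (t - t₀) := by
    refine image_le_of_deriv_right_lt_deriv_boundary' hf_cont hf_right
      (B := fun s => c + ε * (s - t₀)) (B' := fun _ => ε) (by simpa using h₀) (by fun_prop)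
      (fun s _ => ?_) (fun s hs hfs => ?_) ht
    · simpa using ((hasDerivWithinAt_id s _).sub_const t₀).const_mul ε |>.const_add c
    · have : c ≤ f s := hfs ▸ le_add_of_nonneg_right (mul_nonneg hε.le (sub_nonneg.2 hs.1))
      linarith [hc s hs this]
  have h_cont : Continuous fun ε : ℝ => c + ε * (t - t₀) := by fun_prop
  have : Tendsto (fun ε : ℝ => c + ε * (t - t₀)) (𝓝[>] 0) (𝓝 c) := by
    simpa using (h_cont.tendsto 0).mono_left nhdsWithin_le_nhds
  exact ge_of_tendsto this (eventually_nhdsWithin_of_forall h_barrier)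

theorem mapsTo_Icc_of_hasDerivWithinAt_of_inward {f f' : ℝ → ℝ} {t₀ t₁ a b : ℝ}
    (hf : ∀ t ∈ Icc t₀ t₁, HasDerivWithinAt f (f' t) (Icc t₀ t₁) t) (h₀ : f t₀ ∈ Icc a b)
    (ha : ∀ t ∈ Ico t₀ t₁, f t ≤ a → 0 ≤ f' t) (hb : ∀ t ∈ Ico t₀ t₁, b ≤ f t → f' t ≤ 0) :
    MapsTo f (Icc t₀ t₁) (Icc a b) := fun _ ht =>
  ⟨neg_le_neg_iff.1 <| le_of_hasDerivWithinAt_nonpos_of_le (fun s hs => (hf s hs).neg)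
      (neg_le_neg h₀.1) (fun s hs hfs => neg_nonpos.2 (ha s hs (neg_le_neg_iff.1 hfs))) ht,
    le_of_hasDerivWithinAt_nonpos_of_le hf h₀.2 hb ht⟩

theorem IsPicardLindelof.of_lipschitzWith_of_norm_le {E : Type*} [NormedAddCommGroup E]
    {v : ℝ → E → E} {tmin tmax : ℝ} (t₀ : Icc tmin tmax) (x₀ : E) (r : ℝ≥0) {L K : ℝ≥0}
    (hlip : ∀ t ∈ Icc tmin tmax, LipschitzWith K (v t))
    (hcont : ∀ x, ContinuousOn (v · x) (Icc tmin tmax))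
    (hnorm : ∀ t ∈ Icc tmin tmax, ∀ x, ‖v t x‖ ≤ L) :
    IsPicardLindelof v t₀ x₀ (L * (tmax - tmin).toNNReal + r) r L K where
  lipschitzOnWith t ht := (hlip t ht).lipschitzOnWith
  continuousOn x _ := hcont x
  norm_le t ht x _ := hnorm t ht x
  mul_max_le := by
    rw [NNReal.coe_add, add_sub_cancel_right, NNReal.coe_mul,
      Real.coe_toNNReal _ (by linarith [t₀.2.1, t₀.2.2])]
    gcongr
    exact max_le (by linarith [t₀.2.1]) (by linarith [t₀.2.2])

theorem exists_flow_mapsTo_Icc_of_inward {g : ℝ → ℝ → ℝ} {t₀ t₁ a b : ℝ} {K : ℝ≥0}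
    (ht : t₀ ≤ t₁) (hab : a ≤ b)
    (hg : ContinuousOn (fun p : ℝ × ℝ => g p.1 p.2) (Icc a b ×ˢ Icc t₀ t₁))
    (hlip : ∀ t ∈ Icc t₀ t₁, LipschitzOnWith K (g · t) (Icc a b))
    (hga : ∀ t ∈ Icc t₀ t₁, 0 ≤ g a t) (hgb : ∀ t ∈ Icc t₀ t₁, g b t ≤ 0) :
    ∃ φ : ℝ → ℝ → ℝ, ContinuousOn (φ · t₁) (Icc a b) ∧ ∀ x ∈ Icc a b, φ x t₀ = x ∧
      MapsTo (φ x) (Icc t₀ t₁) (Icc a b) ∧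
      ∀ t ∈ Icc t₀ t₁, HasDerivWithinAt (φ x) (g (φ x t) t) (Icc t₀ t₁) t := by
  set v : ℝ → ℝ → ℝ := fun t x => g (projIcc a b hab x) t with hv
  have hv_of_mem {x : ℝ} (hx : x ∈ Icc a b) (t : ℝ) : v t x = g x t := by
    simp [hv, projIcc_of_mem hab hx]
  obtain ⟨C, hC⟩ := (isCompact_Icc.prod isCompact_Icc).exists_bound_of_continuousOn hg
  have hv_norm : ∀ t ∈ Icc t₀ t₁, ∀ x, ‖v t x‖ ≤ C.toNNReal := fun t ht x =>
    (hC (projIcc a b hab x, t) ⟨(projIcc a b hab x).2, ht⟩).trans (Real.le_coe_toNNReal C)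
  have hv_lip : ∀ t ∈ Icc t₀ t₁, LipschitzWith K (v t) := fun t ht => by
    simpa [hv, Function.comp_def] using lipschitzOnWith_univ.1 <| (hlip t ht).comp
      (LipschitzWith.subtype_val _ |>.comp (LipschitzWith.projIcc hab)).lipschitzOnWith
      fun x _ => (projIcc a b hab x).2
  have hv_cont (x : ℝ) : ContinuousOn (v · x) (Icc t₀ t₁) :=
    hg.comp (continuousOn_const.prodMk continuousOn_id) fun t ht => ⟨(projIcc a b hab x).2, ht⟩
  obtain ⟨φ, hφ, L, hφ_lip⟩ := (IsPicardLindelof.of_lipschitzWith_of_norm_le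
    ⟨t₀, left_mem_Icc.2 ht⟩ a (b - a).toNNReal hv_lip hv_cont hv_norm)
      |>.exists_forall_mem_closedBall_eq_hasDerivWithinAt_lipschitzOnWith
  have hIcc : Icc a b ⊆ closedBall a (b - a).toNNReal := fun x hx => by
    rw [Real.closedBall_eq_Icc, Real.coe_toNNReal _ (sub_nonneg.2 hab)]
    exact ⟨by linarith [hx.1, hx.2], by linarith [hx.2]⟩
  refine ⟨φ, (hφ_lip t₁ (right_mem_Icc.2 ht)).continuousOn.mono hIcc, fun x hx => ?_⟩
  obtain ⟨hφ₀, hφ'⟩ := hφ x (hIcc hx)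
  have hmaps : MapsTo (φ x) (Icc t₀ t₁) (Icc a b) := by
    refine mapsTo_Icc_of_hasDerivWithinAt_of_inward hφ' (by rwa [hφ₀]) (fun t ht hle => ?_)
      fun t ht hle => ?_
    · simpa [hv, projIcc_of_le_left hab hle] using hga t (Ico_subset_Icc_self ht)
    · simpa [hv, projIcc_of_right_le hab hle] using hgb t (Ico_subset_Icc_self ht)
  exact ⟨hφ₀, hmaps, fun t ht => hv_of_mem (hmaps ht) t ▸ hφ' t ht⟩

theorem contDiff_one_of_forall_hasDerivAt {E : Type*} [NormedAddCommGroup E]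
    [NormedSpace ℝ E] {g : E → ℝ → E} (hg : Continuous fun p : E × ℝ => g p.1 p.2)
    {p : ℝ → E} (hp : ∀ t, HasDerivAt p (g (p t) t) t) : ContDiff ℝ 1 p := by
  have hp_diff : Differentiable ℝ p := fun t => (hp t).differentiableAt
  rw [contDiff_one_iff_deriv, funext fun t => (hp t).deriv]
  exact ⟨hp_diff, hg.comp (hp_diff.continuous.prodMk continuous_id)⟩

theorem stmt19 (T : ℝ) (hT : 0 < T) (g : ℝ → ℝ → ℝ)
    (hg : Continuous fun p : ℝ × ℝ => g p.1 p.2)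
    (K : NNReal) (hlip : ∀ t, LipschitzWith K fun x => g x t)
    (hper : ∀ x t, g x (t + T) = g x t)
    (a b : ℝ) (hab : a < b)
    (hga : ∀ t, 0 ≤ g a t) (hgb : ∀ t, g b t ≤ 0) :
    ∃ p : ℝ → ℝ, (∀ t, p t ∈ Set.Icc a b) ∧ ContDiff ℝ 1 p ∧
      (∀ t, p (t + T) = p t) ∧ ∀ t, HasDerivAt p (g (p t) t) t := by
  have hT_mem : 0 + T ∈ Icc 0 (0 + T) := right_mem_Icc.2 (by linarith)
  obtain ⟨φ, hφ_cont, hφ⟩ := exists_flow_mapsTo_Icc_of_inward hT_mem.1 hab.le hg.continuousOn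
    (fun t _ => (hlip t).lipschitzOnWith) (fun t _ => hga t) (fun t _ => hgb t)
  obtain ⟨c, hc, hc_fix⟩ :=
    exists_mem_Icc_isFixedPt_of_mapsTo hφ_cont hab.le fun x hx => (hφ x hx).2.1 hT_mem
  obtain ⟨hf₀, hf_maps, hf⟩ := hφ c hc
  have hg_toIcoMod (x t : ℝ) : g x (toIcoMod hT 0 t) = g x t := by
    rw [← self_sub_toIcoDiv_zsmul]
    exact Function.Periodic.sub_zsmul_eq (hper x) _
  have hp (t : ℝ) : HasDerivAt (φ c ∘ toIcoMod hT 0) (g (φ c (toIcoMod hT 0 t)) t) t := by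
    rw [← hg_toIcoMod]
    exact hasDerivAt_comp_toIcoMod hT 0 hf (hf₀.trans hc_fix.symm)
      (by rw [hc_fix.eq, hf₀]; exact (hper c 0).symm) t
  exact ⟨φ c ∘ toIcoMod hT 0, fun t => hf_maps (Ico_subset_Icc_self (toIcoMod_mem_Ico hT 0 t)),
    contDiff_one_of_forall_hasDerivAt hg hp, fun t => congrArg (φ c) (toIcoMod_add_right hT 0 t),
    hp⟩
end
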